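/- Consider the factor model Σ = B B' + Σ_ε with identifiability normalization var(f) = I_m, where the rows b_i' of the p × m loading matrix B are an i.i.d. sample from a population with mean zero and covariance Σ_b, and suppose the spectral norm ‖Σ_ε‖ is bounded. Then almost surely as p → ∞, the j-th largest eigenvalue of Σ satisfies λ_j(Σ) = p λ_j(Σ_b)(1 + o(1)) for j = 1,…,m, while the remaining eigenvalues λ_j(Σ) for j > m stay bounded. -/

import Mathlib

/-!
The nonzero eigenvalues of `B Bᵀ` are those of the `m × m` matrix `Bᵀ B = ∑_{i < p} bᵢ bᵢᵀ`,
which by the strong law of large numbers is `p Σ_b + o(p)` almost surely. Eigenvalues are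
Lipschitz in the entries (Weyl), so `λⱼ(Bᵀ B) / p → λⱼ(Σ_b)`. Adding the positive semidefinite
`Σ_ε` with `‖Σ_ε‖ ≤ C` raises each eigenvalue by at most `C`: this is `o(p)` for `j < m`, and
for `j ≥ m` it keeps below `C` the eigenvalues of `B Bᵀ`, which vanish since its rank is at
most `m`. Every eigenvalue comparison goes through the Courant–Fischer min-max principle.
-/

open MeasureTheory ProbabilityTheory Filter Matrix

noncomputable section

/-- The `j`-th largest element (0-indexed) of a finite family of reals. -/
def nthLargest {d : ℕ} (f : Fin d → ℝ) (j : Fin d) : ℝ :=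
  ((Multiset.map f Finset.univ.val).sort (· ≤ ·)).getD (d - 1 - (j : ℕ)) 0

open Classical in
/-- The `j`-th largest eigenvalue of a real matrix (junk value `0` if not symmetric). -/
def eigDesc {d : ℕ} (M : Matrix (Fin d) (Fin d) ℝ) (j : Fin d) : ℝ :=
  if h : M.IsHermitian then nthLargest h.eigenvalues j else 0

open Finset

section nthLargest

variable {d : ℕ}

lemma List.SortedLE.length_sub_le_countP_getElem_le {α : Type*} [LinearOrder α] {l : List α}
    (hl : l.SortedLE) {k : ℕ} (hk : k < l.length) :
    l.length - k ≤ l.countP (fun x => l[k] ≤ x) := by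
  have hdrop : (l.drop k).countP (fun x => l[k] ≤ x) = l.length - k := by
    rw [List.countP_eq_length.2, List.length_drop]
    intro x hx
    obtain ⟨i, hi, rfl⟩ := List.getElem_of_mem hx
    simpa using hl.getElem_le_getElem_of_le (i := k) (j := k + i) (hj := by simp at hi; omega)
      (by omega)
  exact hdrop ▸ (List.drop_sublist k l).countP_le

lemma List.SortedLE.succ_le_countP_le_getElem {α : Type*} [LinearOrder α] {l : List α}
    (hl : l.SortedLE) {k : ℕ} (hk : k < l.length) : k + 1 ≤ l.countP (fun x => x ≤ l[k]) := by
  have htake : (l.take (k + 1)).countP (fun x => x ≤ l[k]) = k + 1 := by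
    rw [List.countP_eq_length.2, List.length_take]
    · omega
    intro x hx
    obtain ⟨i, hi, rfl⟩ := List.getElem_of_mem hx
    simpa using hl.getElem_le_getElem_of_le (i := i) (j := k) (hi := by simp at hi; omega)
      (by simp at hi; omega)
  exact htake ▸ (List.take_sublist (k + 1) l).countP_le

lemma card_filter_eq_countP_sort (f : Fin d → ℝ) (P : ℝ → Prop) [DecidablePred P] :
    #{i | P (f i)} = ((Multiset.map f univ.val).sort (· ≤ ·)).countP P := by
  rw [← Multiset.coe_countP, Multiset.sort_eq, Multiset.countP_map, card_def, filter_val]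

lemma nthLargest_eq_getElem (f : Fin d → ℝ) (j : Fin d) :
    nthLargest f j = ((Multiset.map f univ.val).sort (· ≤ ·))[d - 1 - j]'(by simp; omega) :=
  List.getD_eq_getElem ..

lemma succ_le_card_nthLargest_le (f : Fin d → ℝ) (j : Fin d) :
    j + 1 ≤ #{i | nthLargest f j ≤ f i} := by
  have hl := (Multiset.pairwise_sort (Multiset.map f univ.val) (· ≤ ·)).sortedLE
  have h := hl.length_sub_le_countP_getElem_le (k := d - 1 - j) (by simp; omega)
  rw [card_filter_eq_countP_sort, nthLargest_eq_getElem]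
  simp only [Multiset.length_sort, Multiset.card_map, card_val, card_univ, Fintype.card_fin] at h
  omega

lemma sub_le_card_le_nthLargest (f : Fin d → ℝ) (j : Fin d) :
    d - j ≤ #{i | f i ≤ nthLargest f j} := by
  have hl := (Multiset.pairwise_sort (Multiset.map f univ.val) (· ≤ ·)).sortedLE
  have h := hl.succ_le_countP_le_getElem (k := d - 1 - j) (by simp; omega)
  rw [card_filter_eq_countP_sort f (· ≤ nthLargest f j), nthLargest_eq_getElem]
  omega

end nthLargest

section CourantFischer

variable {n : ℕ} {A : Matrix (Fin n) (Fin n) ℝ}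

lemma dotProduct_ofLp_eq_inner (x y : EuclideanSpace ℝ (Fin n)) :
    WithLp.ofLp x ⬝ᵥ WithLp.ofLp y = inner ℝ x y := by
  rw [EuclideanSpace.inner_eq_star_dotProduct, star_trivial, dotProduct_comm]

lemma exists_eigenspan (hA : A.IsHermitian) (T : Finset (Fin n)) :
    ∃ V : Submodule ℝ (Fin n → ℝ), Module.finrank ℝ V = #T ∧ ∀ x ∈ V, ∃ c : Fin n → ℝ,
      x ⬝ᵥ x = ∑ i ∈ T, c i ^ 2 ∧ x ⬝ᵥ A *ᵥ x = ∑ i ∈ T, hA.eigenvalues i * c i ^ 2 := by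
  have hb := hA.eigenvectorBasis.orthonormal
  refine ⟨(Submodule.span ℝ (hA.eigenvectorBasis '' T)).map
    (WithLp.linearEquiv 2 ℝ (Fin n → ℝ)).toLinearMap, ?_, ?_⟩
  · rw [LinearEquiv.finrank_map_eq, Set.image_eq_range, ← Fintype.card_coe]
    exact finrank_span_eq_card (hb.linearIndependent.comp _ Subtype.val_injective)
  rintro _ ⟨y, hy, rfl⟩
  obtain ⟨c, rfl⟩ := (Submodule.mem_span_image_finset_iff_exists_fun' ℝ).1 hy
  have hAy : A *ᵥ WithLp.ofLp (∑ i ∈ T, c i • hA.eigenvectorBasis i) =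
      WithLp.ofLp (∑ i ∈ T, (hA.eigenvalues i * c i) • hA.eigenvectorBasis i) := by
    simp only [WithLp.ofLp_sum, WithLp.ofLp_smul, mulVec_sum, mulVec_smul,
      hA.mulVec_eigenvectorBasis, smul_smul, mul_comm]
  refine ⟨c, ?_, ?_⟩ <;>
    simp only [LinearEquiv.coe_coe, WithLp.coe_linearEquiv, hAy, dotProduct_ofLp_eq_inner,
      hb.inner_sum, sq, RCLike.conj_to_real]
  exact Finset.sum_congr rfl fun i _ => by ring

lemma dotProduct_self_nonneg {ι : Type*} [Fintype ι] (x : ι → ℝ) : 0 ≤ x ⬝ᵥ x :=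
  Finset.sum_nonneg fun i _ => mul_self_nonneg (x i)

lemma dotProduct_self_pos {ι : Type*} [Fintype ι] {x : ι → ℝ} (hx : x ≠ 0) : 0 < x ⬝ᵥ x :=
  (dotProduct_self_nonneg x).lt_of_ne (Ne.symm (dotProduct_self_eq_zero.not.2 hx))

lemma exists_ne_zero_mem_inf_of_lt_finrank_add {U W : Submodule ℝ (Fin n → ℝ)}
    (h : n < Module.finrank ℝ U + Module.finrank ℝ W) : ∃ x ∈ U, x ∈ W ∧ x ≠ 0 := by
  by_contra! hUW
  have := Submodule.finrank_add_finrank_le_of_disjoint (Submodule.disjoint_def.2 hUW)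
  simp only [Module.finrank_fin_fun] at this
  omega

lemma eigDesc_eq_nthLargest (hA : A.IsHermitian) (j : Fin n) :
    eigDesc A j = nthLargest hA.eigenvalues j :=
  dif_pos hA

lemma exists_quadForm_le_eigDesc (hA : A.IsHermitian) (j : Fin n) :
    ∃ W : Submodule ℝ (Fin n → ℝ), n ≤ Module.finrank ℝ W + j ∧
      ∀ x ∈ W, x ⬝ᵥ A *ᵥ x ≤ eigDesc A j * (x ⬝ᵥ x) := by
  rw [eigDesc_eq_nthLargest hA]
  have hT := sub_le_card_le_nthLargest hA.eigenvalues j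
  obtain ⟨W, hW, hq⟩ := exists_eigenspan hA {i | hA.eigenvalues i ≤ nthLargest hA.eigenvalues j}
  refine ⟨W, by omega, fun x hx => ?_⟩
  obtain ⟨c, hxx, hxAx⟩ := hq x hx
  rw [hxx, hxAx, Finset.mul_sum]
  exact Finset.sum_le_sum fun i hi =>
    mul_le_mul_of_nonneg_right (Finset.mem_filter.1 hi).2 (sq_nonneg _)

lemma exists_eigDesc_le_quadForm (hA : A.IsHermitian) (j : Fin n) :
    ∃ U : Submodule ℝ (Fin n → ℝ), j + 1 ≤ Module.finrank ℝ U ∧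
      ∀ x ∈ U, eigDesc A j * (x ⬝ᵥ x) ≤ x ⬝ᵥ A *ᵥ x := by
  rw [eigDesc_eq_nthLargest hA]
  have hT := succ_le_card_nthLargest_le hA.eigenvalues j
  obtain ⟨U, hU, hq⟩ := exists_eigenspan hA {i | nthLargest hA.eigenvalues j ≤ hA.eigenvalues i}
  refine ⟨U, by omega, fun x hx => ?_⟩
  obtain ⟨c, hxx, hxAx⟩ := hq x hx
  rw [hxx, hxAx, Finset.mul_sum]
  exact Finset.sum_le_sum fun i hi =>
    mul_le_mul_of_nonneg_right (Finset.mem_filter.1 hi).2 (sq_nonneg _)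

theorem eigDesc_le_of_quadForm_le (hA : A.IsHermitian) (j : Fin n)
    (W : Submodule ℝ (Fin n → ℝ)) (hW : n ≤ Module.finrank ℝ W + j) (c : ℝ)
    (hc : ∀ x ∈ W, x ⬝ᵥ A *ᵥ x ≤ c * (x ⬝ᵥ x)) : eigDesc A j ≤ c := by
  obtain ⟨U, hU, hμ⟩ := exists_eigDesc_le_quadForm hA j
  obtain ⟨x, hxU, hxW, hx⟩ := exists_ne_zero_mem_inf_of_lt_finrank_add (U := U) (W := W) (by omega)
  exact le_of_mul_le_mul_right ((hμ x hxU).trans (hc x hxW)) (dotProduct_self_pos hx)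

theorem le_eigDesc_of_le_quadForm (hA : A.IsHermitian) (j : Fin n)
    (U : Submodule ℝ (Fin n → ℝ)) (hU : j + 1 ≤ Module.finrank ℝ U) (c : ℝ)
    (hc : ∀ x ∈ U, c * (x ⬝ᵥ x) ≤ x ⬝ᵥ A *ᵥ x) : c ≤ eigDesc A j := by
  obtain ⟨W, hW, hμ⟩ := exists_quadForm_le_eigDesc hA j
  obtain ⟨x, hxU, hxW, hx⟩ := exists_ne_zero_mem_inf_of_lt_finrank_add (U := U) (W := W) (by omega)
  exact le_of_mul_le_mul_right ((hc x hxU).trans (hμ x hxW)) (dotProduct_self_pos hx)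

end CourantFischer

section Weyl

variable {n : ℕ} {A N : Matrix (Fin n) (Fin n) ℝ}

lemma eigDesc_nonneg (hA : A.IsHermitian) (hA₀ : ∀ x, 0 ≤ x ⬝ᵥ A *ᵥ x) (j : Fin n) :
    0 ≤ eigDesc A j :=
  le_eigDesc_of_le_quadForm hA j ⊤ (by simp) 0 fun x _ => by simpa using hA₀ x

theorem eigDesc_le_eigDesc_add (hA : A.IsHermitian) (hN : N.IsHermitian) (c : ℝ)
    (h : ∀ x, x ⬝ᵥ A *ᵥ x ≤ x ⬝ᵥ N *ᵥ x + c * (x ⬝ᵥ x)) (j : Fin n) :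
    eigDesc A j ≤ eigDesc N j + c := by
  obtain ⟨W, hW, hNW⟩ := exists_quadForm_le_eigDesc hN j
  exact eigDesc_le_of_quadForm_le hA j W hW _ fun x hx => by linarith [h x, hNW x hx]

lemma eigDesc_smul (hA : A.IsHermitian) {c : ℝ} (hc : 0 ≤ c) (j : Fin n) :
    eigDesc (c • A) j = c * eigDesc A j := by
  have hcA : (c • A).IsHermitian := hA.smul (IsSelfAdjoint.all c)
  have hq : ∀ x, x ⬝ᵥ (c • A) *ᵥ x = c * (x ⬝ᵥ A *ᵥ x) := fun x => by
    rw [smul_mulVec, dotProduct_smul, smul_eq_mul]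
  apply le_antisymm
  · obtain ⟨W, hW, hAW⟩ := exists_quadForm_le_eigDesc hA j
    refine eigDesc_le_of_quadForm_le hcA j W hW _ fun x hx => ?_
    rw [hq, mul_assoc]
    exact mul_le_mul_of_nonneg_left (hAW x hx) hc
  · obtain ⟨U, hU, hAU⟩ := exists_eigDesc_le_quadForm hA j
    refine le_eigDesc_of_le_quadForm hcA j U hU _ fun x hx => ?_
    rw [hq, mul_assoc]
    exact mul_le_mul_of_nonneg_left (hAU x hx) hc

lemma dotProduct_mulVec_le_sum_abs (D : Matrix (Fin n) (Fin n) ℝ) (x : Fin n → ℝ) :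
    x ⬝ᵥ D *ᵥ x ≤ (∑ a, ∑ b, |D a b|) * (x ⬝ᵥ x) := by
  have hx : ∀ a, x a ^ 2 ≤ x ⬝ᵥ x := fun a => by
    simpa [dotProduct, sq] using
      Finset.single_le_sum (fun i _ => mul_self_nonneg (x i)) (Finset.mem_univ a)
  have hxx : ∀ a b, |x a| * |x b| ≤ x ⬝ᵥ x := fun a b => by
    nlinarith [hx a, hx b, sq_abs (x a), sq_abs (x b), sq_nonneg (|x a| - |x b|)]
  have hexpand : x ⬝ᵥ D *ᵥ x = ∑ a, ∑ b, x a * D a b * x b := by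
    simp only [dotProduct, mulVec, Finset.mul_sum, mul_assoc]
  rw [hexpand, Finset.sum_mul]
  refine Finset.sum_le_sum fun a _ => ?_
  rw [Finset.sum_mul]
  refine Finset.sum_le_sum fun b _ => ?_
  calc x a * D a b * x b ≤ |D a b| * (|x a| * |x b|) := by
        rw [← abs_mul, ← abs_mul]; exact (le_abs_self _).trans_eq (by ring_nf)
    _ ≤ |D a b| * (x ⬝ᵥ x) := mul_le_mul_of_nonneg_left (hxx a b) (abs_nonneg _)

theorem abs_eigDesc_sub_le (hA : A.IsHermitian) (hN : N.IsHermitian) (j : Fin n) :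
    |eigDesc A j - eigDesc N j| ≤ ∑ a, ∑ b, |(A - N) a b| := by
  have hsymm : ∑ a, ∑ b, |(N - A) a b| = ∑ a, ∑ b, |(A - N) a b| := by
    simp only [Matrix.sub_apply, abs_sub_comm]
  rw [abs_sub_le_iff]
  constructor
  · refine sub_le_iff_le_add'.2 (eigDesc_le_eigDesc_add hA hN _ (fun x => ?_) j)
    have := dotProduct_mulVec_le_sum_abs (A - N) x
    rw [sub_mulVec, dotProduct_sub] at this
    linarith
  · refine sub_le_iff_le_add'.2 (eigDesc_le_eigDesc_add hN hA _ (fun x => ?_) j)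
    have := dotProduct_mulVec_le_sum_abs (N - A) x
    rw [hsymm, sub_mulVec, dotProduct_sub] at this
    linarith

theorem tendsto_eigDesc {ι : Type*} {l : Filter ι} {A : ι → Matrix (Fin n) (Fin n) ℝ}
    (hA : ∀ i, (A i).IsHermitian) (hN : N.IsHermitian) (h : Tendsto A l (nhds N))
    (j : Fin n) : Tendsto (fun i => eigDesc (A i) j) l (nhds (eigDesc N j)) := by
  have hdist : Tendsto (fun i => ∑ a, ∑ b, |(A i - N) a b|) l (nhds 0) := by
    have := tendsto_finsetSum (s := univ) fun a _ => tendsto_finsetSum (s := univ) fun b _ =>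
      (((continuous_id.matrix_elem a b).tendsto N).comp h).sub_const (N a b) |>.abs
    simpa using this
  rw [tendsto_iff_norm_sub_tendsto_zero]
  exact squeeze_zero (fun _ => norm_nonneg _) (fun i => abs_eigDesc_sub_le (hA i) hN j) hdist

end Weyl

section Gram

variable {p m : ℕ} (B : Matrix (Fin p) (Fin m) ℝ)

lemma isHermitian_mul_transpose_self : (B * Bᵀ).IsHermitian := by
  simpa using isHermitian_mul_conjTranspose_self B

lemma dotProduct_mul_transpose_mulVec (x : Fin p → ℝ) :
    x ⬝ᵥ (B * Bᵀ) *ᵥ x = (Bᵀ *ᵥ x) ⬝ᵥ (Bᵀ *ᵥ x) := by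
  rw [← mulVec_mulVec, dotProduct_mulVec, ← mulVec_transpose]

lemma eigDesc_mul_transpose_self_nonneg (k : Fin p) : 0 ≤ eigDesc (B * Bᵀ) k :=
  eigDesc_nonneg (isHermitian_mul_transpose_self B)
    (fun x => by rw [dotProduct_mul_transpose_mulVec]; exact dotProduct_self_nonneg _) k

lemma dotProduct_sq_le_dotProduct_self_mul {ι : Type*} [Fintype ι] (x y : ι → ℝ) :
    (x ⬝ᵥ y) ^ 2 ≤ (x ⬝ᵥ x) * (y ⬝ᵥ y) := by
  simpa [dotProduct, sq] using Finset.sum_mul_sq_le_sq_mul_sq univ x y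

lemma finrank_map_eq_of_injOn {V W : Type*} [AddCommGroup V] [Module ℝ V]
    [AddCommGroup W] [Module ℝ W] [FiniteDimensional ℝ V] (f : V →ₗ[ℝ] W) (U : Submodule ℝ V)
    (hf : ∀ x ∈ U, f x = 0 → x = 0) : Module.finrank ℝ (U.map f) = Module.finrank ℝ U := by
  have hker : LinearMap.ker (f.domRestrict U) = ⊥ :=
    LinearMap.ker_eq_bot'.2 fun x hx => Subtype.ext (hf x x.2 hx)
  have := LinearMap.finrank_range_add_finrank_ker (f.domRestrict U)
  rwa [hker, finrank_bot, add_zero, LinearMap.range_domRestrict] at this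

theorem eigDesc_transpose_mul_self_le {j : ℕ} (hjp : j < p) (hjm : j < m) :
    eigDesc (Bᵀ * B) ⟨j, hjm⟩ ≤ eigDesc (B * Bᵀ) ⟨j, hjp⟩ := by
  have hM : (Bᵀ * B).IsHermitian := by simpa using isHermitian_mul_transpose_self Bᵀ
  have hqM : ∀ y, y ⬝ᵥ (Bᵀ * B) *ᵥ y = (B *ᵥ y) ⬝ᵥ (B *ᵥ y) := fun y => by
    simpa using dotProduct_mul_transpose_mulVec Bᵀ y
  set μ := eigDesc (Bᵀ * B) ⟨j, hjm⟩
  rcases le_or_gt μ 0 with hμ | hμ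
  · exact hμ.trans (eigDesc_mul_transpose_self_nonneg B _)
  obtain ⟨U, hU, hμU⟩ := exists_eigDesc_le_quadForm hM ⟨j, hjm⟩
  have hinj : ∀ y ∈ U, B *ᵥ y = 0 → y = 0 := fun y hy hBy => by
    by_contra hy0
    have := hμU y hy
    rw [hqM, hBy, dotProduct_zero] at this
    exact (mul_pos hμ (dotProduct_self_pos hy0)).not_ge this
  refine le_eigDesc_of_le_quadForm (isHermitian_mul_transpose_self B) _
    (U.map (mulVecLin B)) (by rwa [finrank_map_eq_of_injOn _ _ hinj]) μ ?_
  rintro _ ⟨y, hy, rfl⟩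
  rcases eq_or_ne y 0 with rfl | hy0
  · simp
  have hμy := hμU y hy
  -- Cauchy–Schwarz: `|By|⁴ = (y ⬝ᵥ My)² ≤ |y|² |My|²` for `M = BᵀB`; then divide by `|y|²`.
  have hCS := dotProduct_sq_le_dotProduct_self_mul y ((Bᵀ * B) *ᵥ y)
  rw [hqM] at hCS hμy
  rw [mulVecLin_apply, dotProduct_mul_transpose_mulVec, mulVec_mulVec]
  nlinarith [dotProduct_self_pos hy0, dotProduct_self_nonneg (B *ᵥ y)]

theorem eigDesc_mul_transpose_self_eq (j : Fin m) (hjp : (j : ℕ) < p) :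
    eigDesc (B * Bᵀ) ⟨j, hjp⟩ = eigDesc (Bᵀ * B) j :=
  le_antisymm (by simpa using eigDesc_transpose_mul_self_le Bᵀ j.2 hjp)
    (eigDesc_transpose_mul_self_le B hjp j.2)

theorem eigDesc_mul_transpose_self_eq_zero (k : Fin p) (hk : m ≤ k) :
    eigDesc (B * Bᵀ) k = 0 := by
  refine le_antisymm ?_ (eigDesc_mul_transpose_self_nonneg B k)
  have hrank := LinearMap.finrank_range_add_finrank_ker (mulVecLin Bᵀ)
  have hrange := Submodule.finrank_le (LinearMap.range (mulVecLin Bᵀ))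
  simp only [Module.finrank_fin_fun] at hrank hrange
  refine eigDesc_le_of_quadForm_le (isHermitian_mul_transpose_self B) k
    (LinearMap.ker (mulVecLin Bᵀ)) (by omega) 0 fun x hx => ?_
  rw [dotProduct_mul_transpose_mulVec, show Bᵀ *ᵥ x = 0 from hx]
  simp

end Gram

section Perturbation

variable {n : ℕ} {G E : Matrix (Fin n) (Fin n) ℝ}

lemma eigDesc_le_eigDesc_add_of_nonneg (hG : G.IsHermitian) (hE : E.IsHermitian)
    (hE₀ : ∀ x, 0 ≤ x ⬝ᵥ E *ᵥ x) (j : Fin n) : eigDesc G j ≤ eigDesc (G + E) j := by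
  simpa using eigDesc_le_eigDesc_add hG (hG.add hE) 0 (fun x => by
    simpa [add_mulVec, dotProduct_add] using hE₀ x) j

lemma eigDesc_add_le_of_le (hG : G.IsHermitian) (hE : E.IsHermitian) {C : ℝ}
    (hEC : ∀ x, x ⬝ᵥ E *ᵥ x ≤ C * (x ⬝ᵥ x)) (j : Fin n) :
    eigDesc (G + E) j ≤ eigDesc G j + C :=
  eigDesc_le_eigDesc_add (hG.add hE) hG C (fun x => by
    simpa [add_mulVec, dotProduct_add] using hEC x) j

lemma dotProduct_mulVec_le_of_unit {C : ℝ}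
    (hEC : ∀ x : Fin n → ℝ, ∑ i, x i ^ 2 = 1 → x ⬝ᵥ E *ᵥ x ≤ C) (x : Fin n → ℝ) :
    x ⬝ᵥ E *ᵥ x ≤ C * (x ⬝ᵥ x) := by
  rcases eq_or_ne x 0 with rfl | hx
  · simp
  set s := √(x ⬝ᵥ x)
  have hs : 0 < s := Real.sqrt_pos.2 (dotProduct_self_pos hx)
  have hs2 : s ^ 2 = x ⬝ᵥ x := Real.sq_sqrt (dotProduct_self_nonneg x)
  have hunit : ∑ i, (s⁻¹ • x) i ^ 2 = 1 := by
    simp only [Pi.smul_apply, smul_eq_mul, mul_pow, ← Finset.mul_sum]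
    rw [show ∑ i, x i ^ 2 = x ⬝ᵥ x by simp [dotProduct, sq], ← hs2, inv_pow,
      inv_mul_cancel₀ (by positivity)]
  have h := hEC _ hunit
  rw [mulVec_smul, dotProduct_smul, smul_dotProduct, smul_eq_mul, smul_eq_mul,
    ← mul_assoc, ← sq, inv_pow, hs2, inv_mul_le_iff₀ (dotProduct_self_pos hx)] at h
  linarith

end Perturbation

section FactorModel

variable {m : ℕ}

def sampleLoadings (v : ℕ → Fin m → ℝ) (p : ℕ) : Matrix (Fin p) (Fin m) ℝ :=
  Matrix.of fun i l => v i l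

lemma transpose_mul_sampleLoadings (v : ℕ → Fin m → ℝ) (p : ℕ) :
    (sampleLoadings v p)ᵀ * sampleLoadings v p =
      Matrix.of fun a c => ∑ i ∈ range p, v i a * v i c := by
  ext a c
  simpa [sampleLoadings, mul_apply] using Fin.sum_univ_eq_sum_range (fun i => v i a * v i c) p

theorem tendsto_eigDesc_transpose_mul_sampleLoadings_div {Sb : Matrix (Fin m) (Fin m) ℝ}
    (hSb : Sb.IsHermitian) {v : ℕ → Fin m → ℝ}
    (hv : ∀ a c, Tendsto (fun p : ℕ => (∑ i ∈ range p, v i a * v i c) / p) atTop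
      (nhds (Sb a c))) (j : Fin m) :
    Tendsto (fun p : ℕ => eigDesc ((sampleLoadings v p)ᵀ * sampleLoadings v p) j / p) atTop
      (nhds (eigDesc Sb j)) := by
  have hM : ∀ p, ((sampleLoadings v p)ᵀ * sampleLoadings v p).IsHermitian := fun p => by
    simpa using isHermitian_mul_transpose_self (sampleLoadings v p)ᵀ
  have hconv : Tendsto (fun p : ℕ => (p : ℝ)⁻¹ • ((sampleLoadings v p)ᵀ * sampleLoadings v p))
      atTop (nhds Sb) :=
    tendsto_pi_nhds.2 fun a => tendsto_pi_nhds.2 fun c => by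
      simpa [transpose_mul_sampleLoadings, div_eq_inv_mul] using hv a c
  refine (tendsto_eigDesc (fun p => (hM p).smul (IsSelfAdjoint.all _)) hSb hconv j).congr
    fun p => ?_
  rw [eigDesc_smul (hM p) (by positivity), inv_mul_eq_div]

theorem eigDesc_mul_transpose_add_le_of_le {p : ℕ} (B : Matrix (Fin p) (Fin m) ℝ)
    {E : Matrix (Fin p) (Fin p) ℝ} (hE : E.IsHermitian) {C : ℝ}
    (hEC : ∀ x, x ⬝ᵥ E *ᵥ x ≤ C * (x ⬝ᵥ x)) (k : Fin p) (hk : m ≤ k) :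
    eigDesc (B * Bᵀ + E) k ≤ C := by
  simpa [eigDesc_mul_transpose_self_eq_zero B k hk] using
    eigDesc_add_le_of_le (isHermitian_mul_transpose_self B) hE hEC k

theorem tendsto_eigDesc_sampleLoadings_add_div {Sb : Matrix (Fin m) (Fin m) ℝ}
    (hSb : Sb.IsHermitian) {v : ℕ → Fin m → ℝ}
    (hv : ∀ a c, Tendsto (fun p : ℕ => (∑ i ∈ range p, v i a * v i c) / p) atTop
      (nhds (Sb a c)))
    {E : (p : ℕ) → Matrix (Fin p) (Fin p) ℝ} (hE : ∀ p, (E p).IsHermitian)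
    (hE₀ : ∀ p x, 0 ≤ x ⬝ᵥ E p *ᵥ x) {C : ℝ} (hEC : ∀ p x, x ⬝ᵥ E p *ᵥ x ≤ C * (x ⬝ᵥ x))
    (j : Fin m) :
    Tendsto (fun p : ℕ => (if h : (j : ℕ) < p then
        eigDesc (sampleLoadings v p * (sampleLoadings v p)ᵀ + E p) ⟨j, h⟩ else 0) / p)
      atTop (nhds (eigDesc Sb j)) := by
  have hlow := tendsto_eigDesc_transpose_mul_sampleLoadings_div hSb hv j
  have hup := hlow.add (tendsto_const_div_atTop_nhds_zero_nat C)
  rw [add_zero] at hup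
  refine tendsto_of_tendsto_of_tendsto_of_le_of_le' hlow hup ?_ ?_ <;>
    filter_upwards [eventually_gt_atTop (j : ℕ)] with p hp <;>
    rw [dif_pos hp, ← eigDesc_mul_transpose_self_eq _ j hp]
  · gcongr
    exact eigDesc_le_eigDesc_add_of_nonneg (isHermitian_mul_transpose_self _) (hE p) (hE₀ p) _
  · rw [← add_div]
    gcongr
    exact eigDesc_add_le_of_le (isHermitian_mul_transpose_self _) (hE p) (hEC p) _

end FactorModel

theorem ae_tendsto_sum_range_comp_div {Ω S : Type*} [MeasurableSpace Ω] [MeasurableSpace S]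
    {P : Measure Ω} {X : ℕ → Ω → S} (hX : ∀ i, Measurable (X i)) (hindep : iIndepFun X P)
    (hident : ∀ i, P.map (X i) = P.map (X 0)) {g : S → ℝ} (hg : Measurable g)
    (hint : Integrable (fun ω => g (X 0 ω)) P) :
    ∀ᵐ ω ∂P, Tendsto (fun p : ℕ => (∑ i ∈ range p, g (X i ω)) / p) atTop
      (nhds (∫ ω, g (X 0 ω) ∂P)) :=
  strong_law_ae_real (fun i ω => g (X i ω)) hint
    (fun i k hik => (hindep.indepFun hik).comp hg hg)
    fun i => ⟨(hg.comp (hX i)).aemeasurable, (hg.comp (hX 0)).aemeasurable, by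
      change P.map (g ∘ X i) = P.map (g ∘ X 0)
      rw [← Measure.map_map hg (hX i), ← Measure.map_map hg (hX 0), hident i]⟩

theorem factor_model_spiked_eigenvalue_growth_general
    {Ω : Type} [MeasurableSpace Ω] (P : Measure Ω)
    {m : ℕ}
    (Sb : Matrix (Fin m) (Fin m) ℝ) (hSb : Sb.IsHermitian)
    (b : ℕ → Ω → Fin m → ℝ)
    (hbmeas : ∀ i, Measurable (b i))
    (hbindep : iIndepFun b P)
    (hbident : ∀ i : ℕ, Measure.map (b i) P = Measure.map (b 0) P)
    (hbint : ∀ i j k, Integrable (fun ω => b i ω j * b i ω k) P)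
    (hbcov : ∀ i (j k : Fin m), ∫ ω, b i ω j * b i ω k ∂P = Sb j k)
    (Sige : (p : ℕ) → Matrix (Fin p) (Fin p) ℝ)
    (hSige_symm : ∀ p, (Sige p).IsHermitian)
    (hSige_pos : ∀ p (x : Fin p → ℝ), 0 ≤ x ⬝ᵥ (Sige p).mulVec x)
    (Cb : ℝ)
    (hSige_bdd : ∀ p (x : Fin p → ℝ), ∑ i, (x i) ^ 2 = 1 →
      x ⬝ᵥ (Sige p).mulVec x ≤ Cb) :
    ∀ᵐ ω ∂P,
      (∀ j : Fin m,
        Tendsto (fun p : ℕ =>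
            (if h : (j : ℕ) < p then
              eigDesc
                ((Matrix.of fun i k : Fin p => ∑ l, b i ω l * b k ω l) + Sige p)
                ⟨j, h⟩
            else 0) / (p : ℝ))
          atTop (nhds (eigDesc Sb j))) ∧
      ∃ C' : ℝ, ∀ᶠ p : ℕ in atTop, ∀ k : Fin p, m ≤ (k : ℕ) →
        eigDesc ((Matrix.of fun i k : Fin p => ∑ l, b i ω l * b k ω l) + Sige p) k
          ≤ C' := by
  have hmoments : ∀ᵐ ω ∂P, ∀ a c : Fin m, Tendsto
      (fun p : ℕ => (∑ i ∈ range p, b i ω a * b i ω c) / p) atTop (nhds (Sb a c)) :=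
    ae_all_iff.2 fun a => ae_all_iff.2 fun c => by
      simpa only [hbcov 0 a c] using ae_tendsto_sum_range_comp_div hbmeas hbindep hbident
        (g := fun y => y a * y c) (by fun_prop) (hbint 0 a c)
  have hEC : ∀ p x, x ⬝ᵥ Sige p *ᵥ x ≤ Cb * (x ⬝ᵥ x) :=
    fun p => dotProduct_mulVec_le_of_unit (hSige_bdd p)
  filter_upwards [hmoments] with ω hω
  have hgram : ∀ p, (Matrix.of fun i k : Fin p => ∑ l, b i ω l * b k ω l) =
      sampleLoadings (b · ω) p * (sampleLoadings (b · ω) p)ᵀ := fun p => by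
    ext
    simp [sampleLoadings, mul_apply]
  simp only [hgram]
  exact ⟨tendsto_eigDesc_sampleLoadings_add_div hSb hω hSige_symm hSige_pos hEC, Cb,
    .of_forall fun p => eigDesc_mul_transpose_add_le_of_le _ (hSige_symm p) (hEC p)⟩

/-- **Eigenvalue growth in pervasive factor models** (Fan–Wang, eq. (2.1)). If the rows
`bᵢ'` of the `p × m` loading matrix `B` are an i.i.d. sample with mean zero and
covariance `Σ_b`, and `‖Σ_ε‖` is uniformly bounded, then almost surely, as `p → ∞`,
the `j`-th largest eigenvalue of `Σ = BB' + Σ_ε` satisfies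
`λⱼ(Σ) = p λⱼ(Σ_b)(1 + o(1))` for `j ≤ m` (equivalently `λⱼ(Σ)/p → λⱼ(Σ_b)`), while
the remaining eigenvalues stay bounded. -/
theorem factor_model_spiked_eigenvalue_growth
    {Ω : Type} [MeasurableSpace Ω] (P : Measure Ω) [IsProbabilityMeasure P]
    {m : ℕ} (hm : 0 < m)
    (Sb : Matrix (Fin m) (Fin m) ℝ) (hSb : Sb.IsHermitian)
    (hSbpos : ∀ x : Fin m → ℝ, 0 ≤ x ⬝ᵥ Sb.mulVec x)
    (b : ℕ → Ω → Fin m → ℝ)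
    (hbmeas : ∀ i, Measurable (b i))
    (hbindep : iIndepFun b P)
    (hbident : ∀ i : ℕ, Measure.map (b i) P = Measure.map (b 0) P)
    (hbmean : ∀ i j, ∫ ω, b i ω j ∂P = 0)
    (hbint : ∀ i j k, Integrable (fun ω => b i ω j * b i ω k) P)
    (hbcov : ∀ i (j k : Fin m), ∫ ω, b i ω j * b i ω k ∂P = Sb j k)
    (Sige : (p : ℕ) → Matrix (Fin p) (Fin p) ℝ)
    (hSige_symm : ∀ p, (Sige p).IsHermitian)
    (hSige_pos : ∀ p (x : Fin p → ℝ), 0 ≤ x ⬝ᵥ (Sige p).mulVec x)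
    (Cb : ℝ)
    (hSige_bdd : ∀ p (x : Fin p → ℝ), ∑ i, (x i) ^ 2 = 1 →
      x ⬝ᵥ (Sige p).mulVec x ≤ Cb) :
    ∀ᵐ ω ∂P,
      (∀ j : Fin m,
        Tendsto (fun p : ℕ =>
            (if h : (j : ℕ) < p then
              eigDesc
                ((Matrix.of fun i k : Fin p => ∑ l, b i ω l * b k ω l) + Sige p)
                ⟨j, h⟩
            else 0) / (p : ℝ))
          atTop (nhds (eigDesc Sb j))) ∧
      ∃ C' : ℝ, ∀ᶠ p : ℕ in atTop, ∀ k : Fin p, m ≤ (k : ℕ) →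
        eigDesc ((Matrix.of fun i k : Fin p => ∑ l, b i ω l * b k ω l) + Sige p) k
          ≤ C' :=
  factor_model_spiked_eigenvalue_growth_general P Sb hSb b hbmeas hbindep hbident hbint hbcov Sige
    hSige_symm hSige_pos Cb hSige_bdd
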